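/- arXiv:2210.01989 — 2 statements merged into one kernel-verified Lean document; each statement's English description precedes it below -/
import Mathlib

section
/- Let d, m be natural numbers with m ≥ 1, and let ν be the product over Fin m of the standard Gaussian measure on ℝ^d. For all x, y ∈ ℝ^d with ‖x‖ ≤ 1 and ‖y‖ ≤ 1, the mean-squared error of the m-feature FAVOR+ estimator is bounded by ((e⁴ − 1)/m) · exp(⟨x, y⟩)²; that is, ∫ ( (1/m) Σ_{i=1}^m exp(−‖x‖²/2 − ‖y‖²/2) · exp(⟨w_i, x + y⟩) − exp(⟨x, y⟩) )² dν(w) ≤ ((exp 4 − 1)/m) · exp(⟨x, y⟩)². In particular the MSE is bounded above by a constant independent of x and y, and tends to 0 as the softmax kernel value exp(⟨x, y⟩) tends to 0. -/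
open MeasureTheory ProbabilityTheory Real
open scoped ENNReal NNReal
set_option maxHeartbeats 1000000

lemma gauss_pdf_shift (t a : ℝ) :
    rexp (t * a) * gaussianPDFReal 0 1 a = rexp (t ^ 2 / 2) * gaussianPDFReal t 1 a := by
  have h1 : rexp (t * a) * rexp (-(a - 0) ^ 2 / (2 * 1)) =
      rexp (t ^ 2 / 2) * rexp (-(a - t) ^ 2 / (2 * 1)) := by
    rw [← Real.exp_add, ← Real.exp_add]; congr 1; ring
  simp only [gaussianPDFReal, NNReal.coe_one]
  linear_combination (√(2 * π * 1))⁻¹ * h1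

lemma gauss_exp_integral (t : ℝ) :
    ∫ a, rexp (t * a) ∂(gaussianReal 0 1) = rexp (t ^ 2 / 2) := by
  rw [gaussianReal_of_var_ne_zero 0 one_ne_zero]
  have : (gaussianPDF 0 1) = fun x => ((gaussianPDFReal 0 1 x).toNNReal : ℝ≥0∞) := rfl
  rw [this, integral_withDensity_eq_integral_smul
    ((measurable_gaussianPDFReal 0 1).real_toNNReal) _]
  have : ∀ a : ℝ, (gaussianPDFReal 0 1 a).toNNReal • rexp (t * a)
      = rexp (t ^ 2 / 2) * gaussianPDFReal t 1 a := by
    intro a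
    rw [NNReal.smul_def, smul_eq_mul, Real.coe_toNNReal _ (gaussianPDFReal_nonneg 0 1 a),
      mul_comm, gauss_pdf_shift]
  simp_rw [this]
  rw [MeasureTheory.integral_const_mul, integral_gaussianPDFReal_eq_one t one_ne_zero, mul_one]

lemma gauss_exp_integrable (t : ℝ) :
    Integrable (fun a => rexp (t * a)) (gaussianReal 0 1) := by
  rw [gaussianReal_of_var_ne_zero 0 one_ne_zero]
  rw [integrable_withDensity_iff (measurable_gaussianPDF 0 1)
    (Filter.Eventually.of_forall fun x => ENNReal.ofReal_lt_top)]
  have : ∀ a : ℝ, rexp (t * a) * (gaussianPDF 0 1 a).toReal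
      = rexp (t ^ 2 / 2) * gaussianPDFReal t 1 a := by
    intro a
    rw [gaussianPDF, ENNReal.toReal_ofReal (gaussianPDFReal_nonneg 0 1 a), gauss_pdf_shift]
  simp_rw [this]
  exact (integrable_gaussianPDFReal t 1).const_mul _

lemma pi_gauss_exp_integral {ι : Type*} [Fintype ι] (t : ι → ℝ) :
    ∫ a : ι → ℝ, rexp (∑ i, t i * a i) ∂(Measure.pi fun _ : ι => gaussianReal 0 1)
      = rexp (∑ i, t i ^ 2 / 2) := by
  letI msR : MeasureSpace ℝ := ⟨gaussianReal 0 1⟩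
  haveI sfR : SigmaFinite (volume : Measure ℝ) :=
    inferInstanceAs (SigmaFinite (gaussianReal 0 1))
  calc ∫ a : ι → ℝ, rexp (∑ i, t i * a i) ∂(Measure.pi fun _ : ι => gaussianReal 0 1)
      = ∫ a : ι → ℝ, ∏ i, rexp (t i * a i) ∂(Measure.pi fun _ : ι => gaussianReal 0 1) :=
        integral_congr_ae (Filter.Eventually.of_forall fun a => Real.exp_sum _ _)
    _ = ∏ i, ∫ x : ℝ, rexp (t i * x) ∂(gaussianReal 0 1) := by
        exact integral_fintype_prod_eq_prod (fun i a => rexp (t i * a))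
          (μ := fun _ => gaussianReal 0 1)
    _ = ∏ i, rexp (t i ^ 2 / 2) :=
        Finset.prod_congr rfl fun i _ => gauss_exp_integral (t i)
    _ = rexp (∑ i, t i ^ 2 / 2) := (Real.exp_sum _ _).symm

lemma pi_gauss_exp_integrable {ι : Type*} [Fintype ι] (t : ι → ℝ) :
    Integrable (fun a : ι → ℝ => rexp (∑ i, t i * a i))
      (Measure.pi fun _ : ι => gaussianReal 0 1) := by
  letI msR : MeasureSpace ℝ := ⟨gaussianReal 0 1⟩
  haveI sfR : SigmaFinite (volume : Measure ℝ) :=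
    inferInstanceAs (SigmaFinite (gaussianReal 0 1))
  have h : Integrable (fun a : ι → ℝ => ∏ i, rexp (t i * a i))
      (Measure.pi fun _ : ι => gaussianReal 0 1) := by
    exact Integrable.fintype_prod (f := fun i a => rexp (t i * a)) (μ := fun _ => gaussianReal 0 1)
      (fun i => gauss_exp_integrable (t i))
  exact h.congr (Filter.Eventually.of_forall fun a => (Real.exp_sum _ _).symm)

lemma nested_gauss_exp_integral (m d : ℕ) (c : Fin m → Fin d → ℝ) :
    ∫ w : Fin m → Fin d → ℝ, rexp (∑ i, ∑ k, c i k * w i k)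
        ∂(Measure.pi fun _ : Fin m => Measure.pi fun _ : Fin d => gaussianReal 0 1)
      = rexp (∑ i, ∑ k, c i k ^ 2 / 2) := by
  letI msD : MeasureSpace (Fin d → ℝ) := ⟨Measure.pi fun _ => gaussianReal 0 1⟩
  haveI sfD : SigmaFinite (volume : Measure (Fin d → ℝ)) :=
    inferInstanceAs (SigmaFinite (Measure.pi fun _ : Fin d => gaussianReal 0 1))
  calc ∫ w : Fin m → Fin d → ℝ, rexp (∑ i, ∑ k, c i k * w i k)
        ∂(Measure.pi fun _ : Fin m => Measure.pi fun _ : Fin d => gaussianReal 0 1)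
      = ∫ w : Fin m → Fin d → ℝ, ∏ i, rexp (∑ k, c i k * w i k)
        ∂(Measure.pi fun _ : Fin m => Measure.pi fun _ : Fin d => gaussianReal 0 1) :=
        integral_congr_ae (Filter.Eventually.of_forall fun w => Real.exp_sum _ _)
    _ = ∏ i, ∫ a : Fin d → ℝ, rexp (∑ k, c i k * a k)
          ∂(Measure.pi fun _ : Fin d => gaussianReal 0 1) := by
        exact integral_fintype_prod_eq_prod (fun i a => rexp (∑ k, c i k * a k))
          (μ := fun _ => Measure.pi fun _ : Fin d => gaussianReal 0 1)
    _ = ∏ i, rexp (∑ k, c i k ^ 2 / 2) :=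
        Finset.prod_congr rfl fun i _ => pi_gauss_exp_integral (c i)
    _ = rexp (∑ i, ∑ k, c i k ^ 2 / 2) := (Real.exp_sum _ _).symm

lemma nested_gauss_exp_integrable (m d : ℕ) (c : Fin m → Fin d → ℝ) :
    Integrable (fun w : Fin m → Fin d → ℝ => rexp (∑ i, ∑ k, c i k * w i k))
      (Measure.pi fun _ : Fin m => Measure.pi fun _ : Fin d => gaussianReal 0 1) := by
  letI msD : MeasureSpace (Fin d → ℝ) := ⟨Measure.pi fun _ => gaussianReal 0 1⟩
  haveI sfD : SigmaFinite (volume : Measure (Fin d → ℝ)) :=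
    inferInstanceAs (SigmaFinite (Measure.pi fun _ : Fin d => gaussianReal 0 1))
  have h : Integrable (fun w : Fin m → Fin d → ℝ => ∏ i, rexp (∑ k, c i k * w i k))
      (Measure.pi fun _ : Fin m => Measure.pi fun _ : Fin d => gaussianReal 0 1) := by
    have := Integrable.fintype_prod (ι := Fin m) (E := Fin d → ℝ)
      (f := fun i a => rexp (∑ k, c i k * a k)) (μ := fun _ => Measure.pi fun _ : Fin d => gaussianReal 0 1)
      (fun i => pi_gauss_exp_integrable (c i))
    exact this
  exact h.congr (Filter.Eventually.of_forall fun w => (Real.exp_sum _ _).symm)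

theorem favorPlus_mse_bound (d m : ℕ) (hm : 1 ≤ m)
    (ν : Measure (Fin m → Fin d → ℝ))
    (hν : ν = Measure.pi fun _ : Fin m => Measure.pi fun _ : Fin d => gaussianReal 0 1)
    (x y : Fin d → ℝ)
    (hx : Real.sqrt (∑ k, x k ^ 2) ≤ 1) (hy : Real.sqrt (∑ k, y k ^ 2) ≤ 1) :
    ∫ w, ((1 / (m : ℝ)) * ∑ i : Fin m,
            Real.exp (-(∑ k, x k ^ 2) / 2 - (∑ k, y k ^ 2) / 2) *
              Real.exp (∑ k, w i k * (x k + y k))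
          - Real.exp (∑ k, x k * y k)) ^ 2 ∂ν
      ≤ ((Real.exp 4 - 1) / (m : ℝ)) * Real.exp (∑ k, x k * y k) ^ 2 := by
  subst hν
  set P : Measure (Fin m → Fin d → ℝ) :=
    Measure.pi fun _ : Fin m => Measure.pi fun _ : Fin d => gaussianReal 0 1 with hP
  haveI : IsProbabilityMeasure P := by rw [hP]; infer_instance
  set C : ℝ := Real.exp (-(∑ k, x k ^ 2) / 2 - (∑ k, y k ^ 2) / 2) with hC
  set S : ℝ := Real.exp (∑ k, x k * y k) with hS
  set T : ℝ := ∑ k, (x k + y k) ^ 2 with hT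
  set g : Fin m → (Fin m → Fin d → ℝ) → ℝ :=
    fun i w => Real.exp (∑ k, w i k * (x k + y k)) with hg
  set c1 : Fin m → Fin m → Fin d → ℝ :=
    fun i l k => if l = i then x k + y k else 0 with hc1
  -- basic sum identities
  have hsum1 : ∀ (i : Fin m) (w : Fin m → Fin d → ℝ),
      (∑ l, ∑ k, c1 i l k * w l k) = ∑ k, w i k * (x k + y k) := by
    intro i w
    rw [Finset.sum_eq_single i]
    · exact Finset.sum_congr rfl fun k _ => by simp [hc1, mul_comm]
    · intro b _ hb; exact Finset.sum_eq_zero fun k _ => by simp [hc1, hb]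
    · intro h; exact absurd (Finset.mem_univ i) h
  have hsq1 : ∀ i : Fin m, (∑ l, ∑ k, c1 i l k ^ 2 / 2) = T / 2 := by
    intro i
    rw [Finset.sum_eq_single i]
    · rw [← Finset.sum_div, hT]
      congr 1
      exact Finset.sum_congr rfl fun k _ => by simp [hc1]
    · intro b _ hb; exact Finset.sum_eq_zero fun k _ => by simp [hc1, hb]
    · intro h; exact absurd (Finset.mem_univ i) h
  have hsum2 : ∀ (i j : Fin m) (w : Fin m → Fin d → ℝ),
      (∑ l, ∑ k, (c1 i l k + c1 j l k) * w l k)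
        = (∑ k, w i k * (x k + y k)) + ∑ k, w j k * (x k + y k) := by
    intro i j w
    simp_rw [add_mul, Finset.sum_add_distrib]
    rw [hsum1, hsum1]
  -- expressions of g via coefficient matrices
  have hg1 : ∀ (i : Fin m) (w : Fin m → Fin d → ℝ),
      g i w = Real.exp (∑ l, ∑ k, c1 i l k * w l k) := fun i w => by rw [hsum1, hg]
  have hgg : ∀ (i j : Fin m) (w : Fin m → Fin d → ℝ),
      g i w * g j w = Real.exp (∑ l, ∑ k, (c1 i l k + c1 j l k) * w l k) := by
    intro i j w
    rw [hsum2, Real.exp_add, hg]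
  -- integrability
  have hInt_g : ∀ i : Fin m, Integrable (g i) P :=
    fun i => (nested_gauss_exp_integrable m d (c1 i)).congr
      (Filter.Eventually.of_forall fun w => (hg1 i w).symm)
  have hInt_gg : ∀ i j : Fin m, Integrable (fun w => g i w * g j w) P :=
    fun i j => (nested_gauss_exp_integrable m d (fun l k => c1 i l k + c1 j l k)).congr
      (Filter.Eventually.of_forall fun w => (hgg i j w).symm)
  -- integrals
  have hI_g : ∀ i : Fin m, (∫ w, g i w ∂P) = Real.exp (T / 2) := by
    intro i
    rw [integral_congr_ae (Filter.Eventually.of_forall (hg1 i)),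
      nested_gauss_exp_integral, hsq1 i]
  have hI_gg : ∀ i j : Fin m,
      (∫ w, g i w * g j w ∂P) = if i = j then Real.exp (2 * T) else Real.exp T := by
    intro i j
    rw [integral_congr_ae (Filter.Eventually.of_forall (hgg i j)),
      nested_gauss_exp_integral]
    by_cases h : i = j
    · subst h
      rw [if_pos rfl]
      congr 1
      have hq : ∀ (l : Fin m) (k : Fin d),
          (c1 i l k + c1 i l k) ^ 2 / 2 = 4 * (c1 i l k ^ 2 / 2) := fun l k => by ring
      simp_rw [hq, ← Finset.mul_sum]
      rw [hsq1 i]; ring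
    · rw [if_neg h]
      congr 1
      have hq : ∀ (l : Fin m) (k : Fin d),
          (c1 i l k + c1 j l k) ^ 2 / 2 = c1 i l k ^ 2 / 2 + c1 j l k ^ 2 / 2 := by
        intro l k
        have h0 : c1 i l k * c1 j l k = 0 := by
          by_cases hli : l = i
          · have : ¬ l = j := fun hlj => h (hli.symm.trans hlj)
            simp [hc1, this]
          · simp [hc1, hli]
        linear_combination h0
      simp_rw [hq, Finset.sum_add_distrib]
      rw [hsq1 i, hsq1 j]; ring
  -- pointwise expansion of the square
  have hpt : ∀ w : Fin m → Fin d → ℝ,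
      ((1 / (m : ℝ)) * ∑ i : Fin m, C * g i w - S) ^ 2
        = (C / m) ^ 2 * (∑ i : Fin m, ∑ j : Fin m, g i w * g j w)
          - (2 * C * S / m) * (∑ i : Fin m, g i w) + S ^ 2 := by
    intro w
    rw [← Finset.sum_mul_sum, ← Finset.mul_sum]
    ring
  rw [integral_congr_ae (Filter.Eventually.of_forall hpt)]
  have hintGG : Integrable (fun w => ∑ i : Fin m, ∑ j : Fin m, g i w * g j w) P :=
    integrable_finset_sum _ fun i _ => integrable_finset_sum _ fun j _ => hInt_gg i j
  have hintG : Integrable (fun w => ∑ i : Fin m, g i w) P :=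
    integrable_finset_sum _ fun i _ => hInt_g i
  have hA : Integrable (fun w => (C / (m : ℝ)) ^ 2 * ∑ i : Fin m, ∑ j : Fin m, g i w * g j w) P :=
    hintGG.const_mul _
  have hB : Integrable (fun w => 2 * C * S / (m : ℝ) * ∑ i : Fin m, g i w) P :=
    hintG.const_mul _
  have hAB : Integrable (fun w => (C / (m : ℝ)) ^ 2 * (∑ i : Fin m, ∑ j : Fin m, g i w * g j w)
      - 2 * C * S / (m : ℝ) * ∑ i : Fin m, g i w) P := hA.sub hB
  rw [integral_add hAB (integrable_const _),
    integral_sub hA hB,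
    MeasureTheory.integral_const_mul, MeasureTheory.integral_const_mul, integral_const,
    integral_finset_sum _ (fun i _ => integrable_finset_sum _ fun j _ => hInt_gg i j),
    integral_finset_sum _ (fun i _ => hInt_g i)]
  simp only [measure_univ, probReal_univ, ENNReal.toReal_one, smul_eq_mul, one_mul]
  have hsums : ∀ i : Fin m, (∫ w, ∑ j : Fin m, g i w * g j w ∂P)
      = Real.exp (2 * T) - Real.exp T + m * Real.exp T := by
    intro i
    rw [integral_finset_sum _ (fun j _ => hInt_gg i j)]
    have h1 : ∀ j : Fin m, (∫ w, g i w * g j w ∂P)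
        = (if j = i then Real.exp (2 * T) - Real.exp T else 0) + Real.exp T := by
      intro j
      rw [hI_gg i j]
      by_cases hj : i = j
      · simp [hj]
      · rw [if_neg hj, if_neg (fun hh : j = i => hj hh.symm)]; ring
    rw [Finset.sum_congr rfl fun j _ => h1 j, Finset.sum_add_distrib,
      Finset.sum_ite_eq' Finset.univ i fun _ => Real.exp (2 * T) - Real.exp T,
      Finset.sum_const, Finset.card_univ, Fintype.card_fin]
    simp [nsmul_eq_mul]
  rw [Finset.sum_congr rfl fun i _ => hsums i, Finset.sum_congr rfl fun i _ => hI_g i,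
    Finset.sum_const, Finset.sum_const, Finset.card_univ, Fintype.card_fin,
    nsmul_eq_mul, nsmul_eq_mul]
  -- arithmetic facts
  have hm0 : (m : ℝ) ≠ 0 := Nat.cast_ne_zero.mpr (by omega)
  have hmpos : (0 : ℝ) < m := by positivity
  have hT_expand : T = (∑ k, x k ^ 2) + 2 * (∑ k, x k * y k) + ∑ k, y k ^ 2 := by
    rw [hT, show (∑ k, (x k + y k) ^ 2) = ∑ k, (x k ^ 2 + 2 * (x k * y k) + y k ^ 2) from
      Finset.sum_congr rfl fun k _ => by ring]
    rw [Finset.sum_add_distrib, Finset.sum_add_distrib, ← Finset.mul_sum]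
  have hCS : C * Real.exp (T / 2) = S := by
    rw [hC, hS, ← Real.exp_add]
    congr 1
    rw [hT_expand]; ring
  have hexpT : Real.exp T = Real.exp (T / 2) * Real.exp (T / 2) := by
    rw [← Real.exp_add]; congr 1; ring
  have hexp2T : Real.exp (2 * T) = Real.exp (T / 2) * Real.exp (T / 2) *
      (Real.exp (T / 2) * Real.exp (T / 2)) := by
    rw [show (2 : ℝ) * T = T / 2 + T / 2 + (T / 2 + T / 2) by ring,
      Real.exp_add, Real.exp_add]
  have key : (C / m) ^ 2 *
        ((m : ℝ) * (Real.exp (2 * T) - Real.exp T + m * Real.exp T))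
        - 2 * C * S / m * ((m : ℝ) * Real.exp (T / 2)) + S ^ 2
      = S ^ 2 * (Real.exp T - 1) / m := by
    rw [hexp2T, hexpT, ← hCS]
    field_simp
    ring
  rw [key]
  -- final bound
  have hx2 : (∑ k, x k ^ 2) ≤ 1 := by
    have h0 : (0 : ℝ) ≤ ∑ k, x k ^ 2 := Finset.sum_nonneg fun k _ => sq_nonneg _
    nlinarith [Real.sq_sqrt h0, Real.sqrt_nonneg (∑ k, x k ^ 2)]
  have hy2 : (∑ k, y k ^ 2) ≤ 1 := by
    have h0 : (0 : ℝ) ≤ ∑ k, y k ^ 2 := Finset.sum_nonneg fun k _ => sq_nonneg _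
    nlinarith [Real.sq_sqrt h0, Real.sqrt_nonneg (∑ k, y k ^ 2)]
  have hxy : (∑ k, x k * y k) ≤ 1 := by
    have hcs := Finset.sum_mul_sq_le_sq_mul_sq Finset.univ x y
    have h0x : (0 : ℝ) ≤ ∑ k, x k ^ 2 := Finset.sum_nonneg fun k _ => sq_nonneg _
    have h0y : (0 : ℝ) ≤ ∑ k, y k ^ 2 := Finset.sum_nonneg fun k _ => sq_nonneg _
    nlinarith [hcs, hx2, hy2, h0x, h0y]
  have hT4 : T ≤ 4 := by rw [hT_expand]; linarith
  have hexp_le : Real.exp T ≤ Real.exp 4 := Real.exp_le_exp.mpr hT4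
  rw [show (Real.exp 4 - 1) / (m : ℝ) * S ^ 2 = S ^ 2 * (Real.exp 4 - 1) / m by ring]
  gcongr
end

section
/- Let ψ be the Haar mother wavelet, ψ_{i,j}(x) = 2^{i/2} · ψ(2^i x − j) for integers i, j. For every f ∈ L²(ℝ) with Lebesgue measure, the backward discrete wavelet transform reconstructs f: the family ( ⟨ψ_{i,j}, f⟩ · ψ_{i,j} )_{(i,j) ∈ ℤ×ℤ} has sum f in the L² norm, where ⟨ψ_{i,j}, f⟩ = ∫_ℝ f(x) · ψ_{i,j}(x) dx. Equivalently, Parseval's identity holds: Σ_{(i,j) ∈ ℤ×ℤ} ⟨ψ_{i,j}, f⟩² = ‖f‖²_{L²}. -/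
open MeasureTheory Real

/-- The Haar mother wavelet. -/
noncomputable def haarMother (x : ℝ) : ℝ :=
  if 0 ≤ x ∧ x < 1 / 2 then 1 else if 1 / 2 ≤ x ∧ x < 1 then -1 else 0

/-- The dilated-translated Haar wavelet `ψ_{i,j}(x) = 2^{i/2} ψ(2^i x − j)`. -/
noncomputable def haarWavelet (i j : ℤ) (x : ℝ) : ℝ :=
  (2 : ℝ) ^ ((i : ℝ) / 2) * haarMother ((2 : ℝ) ^ i * x - (j : ℝ))

namespace HaarAux
open Set

def D (i j : ℤ) : Set ℝ := Set.Ico ((j : ℝ) * (2:ℝ)^(-i)) (((j:ℝ)+1) * (2:ℝ)^(-i))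
lemma two_zpow_pos (i : ℤ) : (0:ℝ) < (2:ℝ)^i := zpow_pos (by norm_num) i
lemma mem_D {i j : ℤ} {x : ℝ} : x ∈ D i j ↔ (j:ℝ) ≤ (2:ℝ)^i * x ∧ (2:ℝ)^i * x < (j:ℝ)+1 := by
  have h := two_zpow_pos i
  simp only [D, mem_Ico, zpow_neg, ← div_eq_mul_inv, div_le_iff₀ h, lt_div_iff₀ h,
    mul_comm x ((2:ℝ)^i)]

lemma measurableSet_D (i j : ℤ) : MeasurableSet (D i j) := measurableSet_Ico

lemma volume_D (i j : ℤ) : volume (D i j) = ENNReal.ofReal ((2:ℝ)^(-i)) := by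
  rw [D, Real.volume_Ico]; ring_nf

lemma volume_D_ne_top (i j : ℤ) : volume (D i j) ≠ ⊤ := by
  simp [volume_D]

lemma volume_D_toReal (i j : ℤ) : (volume (D i j)).toReal = (2:ℝ)^(-i) := by
  rw [volume_D, ENNReal.toReal_ofReal (two_zpow_pos (-i)).le]

lemma D_disjoint {i j j' : ℤ} (h : j ≠ j') : Disjoint (D i j) (D i j') := by
  rw [Set.disjoint_left]
  intro x hx hx'
  rw [mem_D] at hx hx'
  rcases lt_or_gt_of_ne h with hlt | hlt
  · have : (j:ℝ) + 1 ≤ (j':ℝ) := by exact_mod_cast hlt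
    linarith [hx.2, hx'.1]
  · have : (j':ℝ) + 1 ≤ (j:ℝ) := by exact_mod_cast hlt
    linarith [hx.1, hx'.2]
lemma D_subset_ediv (i : ℤ) (n : ℕ) (j' : ℤ) : D (i + n) j' ⊆ D i (j' / 2^n) := by
  intro x hx
  rw [mem_D] at hx ⊢
  set q : ℤ := j' / 2^n with hq
  have hpow : (0:ℤ) < 2^n := by positivity
  have e := Int.mul_ediv_add_emod j' (2^n)
  have hmn := Int.emod_nonneg j' (by positivity : (2:ℤ)^n ≠ 0)
  have hml := Int.emod_lt_of_pos j' hpow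
  have hcomm : q * 2^n = 2^n * q := mul_comm _ _
  have h1 : q * 2^n ≤ j' := by rw [hq] at *; linarith
  have h2 : j' + 1 ≤ (q + 1) * 2^n := by
    have expand : (q+1) * 2^n = q * 2^n + 2^n := by ring
    rw [hq] at *; linarith
  have hn : (0:ℝ) < (2:ℝ)^(n:ℤ) := two_zpow_pos _
  have hsplit : (2:ℝ)^(i + (n:ℤ)) = (2:ℝ)^i * (2:ℝ)^(n:ℤ) := zpow_add₀ (by norm_num) _ _
  have hq1 : (q:ℝ) * (2:ℝ)^(n:ℤ) ≤ (j':ℝ) := by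
    have := h1; push_cast at this ⊢
    rw [zpow_natCast]; exact_mod_cast this
  have hq2 : (j':ℝ) + 1 ≤ ((q:ℝ)+1) * (2:ℝ)^(n:ℤ) := by
    have := h2; push_cast at this ⊢
    rw [zpow_natCast]; exact_mod_cast this
  rw [hsplit] at hx
  obtain ⟨ha, hb⟩ := hx
  constructor
  · nlinarith
  · nlinarith

/-- Trichotomy: a finer dyadic interval is contained in or disjoint from a coarser one. -/
lemma D_subset_or_disjoint {i i' j j' : ℤ} (h : i ≤ i') :
    D i' j' ⊆ D i j ∨ Disjoint (D i j) (D i' j') := by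
  obtain ⟨n, rfl⟩ : ∃ n : ℕ, i' = i + n := ⟨(i' - i).toNat, by omega⟩
  by_cases hj : j' / 2^n = j
  · left; simpa [hj] using D_subset_ediv i n j'
  · right
    exact ((D_disjoint (Ne.symm hj)).mono_right (D_subset_ediv i n j')).symm.symm

/-- Parent is disjoint union of children. -/
lemma D_split (i j : ℤ) : D i j = D (i+1) (2*j) ∪ D (i+1) (2*j+1) := by
  ext x
  have hsplit : (2:ℝ)^(i+1) = (2:ℝ)^i * 2 := by
    rw [zpow_add₀ (by norm_num : (2:ℝ) ≠ 0)]; norm_num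
  simp only [mem_union, mem_D, hsplit]
  push_cast
  constructor
  · rintro ⟨h1, h2⟩
    rcases le_or_gt (2*(j:ℝ)+1) (2^i * x * 2) with h | h
    · right; constructor <;> linarith
    · left; constructor <;> linarith
  · rintro (⟨h1, h2⟩ | ⟨h1, h2⟩) <;> constructor <;> linarith

/-- Pointwise formula for the Haar wavelet as difference of indicators of dyadic children. -/
lemma haarWavelet_eq (i j : ℤ) (x : ℝ) :
    haarWavelet i j x = (2:ℝ)^((i:ℝ)/2) *
      ((D (i+1) (2*j)).indicator (fun _ => (1:ℝ)) x
        - (D (i+1) (2*j+1)).indicator (fun _ => (1:ℝ)) x) := by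
  have hsplit : (2:ℝ)^(i+1) = (2:ℝ)^i * 2 := by
    rw [zpow_add₀ (by norm_num : (2:ℝ) ≠ 0)]; norm_num
  have hmem1 : x ∈ D (i+1) (2*j) ↔ (0 ≤ (2:ℝ)^i * x - j ∧ (2:ℝ)^i * x - j < 1/2) := by
    rw [mem_D, hsplit]; push_cast; constructor <;> rintro ⟨a, b⟩ <;> constructor <;> linarith
  have hmem2 : x ∈ D (i+1) (2*j+1) ↔ (1/2 ≤ (2:ℝ)^i * x - j ∧ (2:ℝ)^i * x - j < 1) := by
    rw [mem_D, hsplit]; push_cast; constructor <;> rintro ⟨a, b⟩ <;> constructor <;> linarith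
  rw [haarWavelet, haarMother]
  by_cases h1 : (0 ≤ (2:ℝ)^i * x - j ∧ (2:ℝ)^i * x - j < 1/2)
  · rw [if_pos h1, Set.indicator_of_mem (hmem1.2 h1), Set.indicator_of_notMem (by
      rw [hmem2]; intro h2; linarith [h1.2, h2.1])]
    ring
  · rw [if_neg h1]
    by_cases h2 : ((1:ℝ)/2 ≤ (2:ℝ)^i * x - j ∧ (2:ℝ)^i * x - j < 1)
    · rw [if_pos h2, Set.indicator_of_mem (hmem2.2 h2), Set.indicator_of_notMem (by
        rw [hmem1]; intro h1'; linarith [h1'.2, h2.1])]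
      ring
    · rw [if_neg h2, Set.indicator_of_notMem (by rw [hmem1]; exact h1),
        Set.indicator_of_notMem (by rw [hmem2]; exact h2)]
      ring


open scoped RealInnerProductSpace

/-- The L² indicator of a dyadic interval. -/
noncomputable def E (i j : ℤ) : Lp ℝ 2 (volume : Measure ℝ) :=
  indicatorConstLp 2 (measurableSet_D i j) (volume_D_ne_top i j) (1:ℝ)

lemma E_coeFn (i j : ℤ) : ⇑(E i j) =ᵐ[volume] (D i j).indicator (fun _ => (1:ℝ)) :=
  indicatorConstLp_coeFn

lemma inner_E (i j : ℤ) (g : Lp ℝ 2 (volume : Measure ℝ)) :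
    ⟪E i j, g⟫ = ∫ x in D i j, g x := by
  rw [E, MeasureTheory.L2.inner_indicatorConstLp_eq_setIntegral_inner]
  simp [RCLike.inner_apply]

lemma norm_E (i j : ℤ) : ‖E i j‖ = (2:ℝ) ^ (-(i:ℝ)/2) := by
  rw [E, norm_indicatorConstLp (by norm_num) (by norm_num)]
  rw [measureReal_def, volume_D_toReal]
  rw [← Real.rpow_intCast 2 (-i), ← Real.rpow_mul (by norm_num : (0:ℝ) ≤ 2)]
  push_cast
  norm_num
  ring_nf

lemma inner_E_E (i j i' j' : ℤ) :
    ⟪E i j, E i' j'⟫ = (volume (D i j ∩ D i' j')).toReal := by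
  rw [inner_E]
  rw [integral_congr_ae (ae_restrict_of_ae (E_coeFn i' j'))]
  rw [setIntegral_indicator (measurableSet_D i' j')]
  simp
  rfl

lemma inner_E_E_of_subset {i j i' j' : ℤ} (h : D i' j' ⊆ D i j) :
    ⟪E i j, E i' j'⟫ = (2:ℝ)^(-i') := by
  rw [inner_E_E, Set.inter_eq_right.mpr h, volume_D_toReal]

lemma inner_E_E_of_disjoint {i j i' j' : ℤ} (h : Disjoint (D i j) (D i' j')) :
    ⟪E i j, E i' j'⟫ = 0 := by
  rw [inner_E_E, Set.disjoint_iff_inter_eq_empty.mp h]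
  simp

lemma E_split (i j : ℤ) : E i j = E (i+1) (2*j) + E (i+1) (2*j+1) := by
  apply MeasureTheory.Lp.ext
  filter_upwards [E_coeFn i j, E_coeFn (i+1) (2*j), E_coeFn (i+1) (2*j+1),
    MeasureTheory.Lp.coeFn_add (E (i+1) (2*j)) (E (i+1) (2*j+1))] with x h1 h2 h3 h4
  rw [h1, h4, Pi.add_apply, h2, h3, D_split i j,
    Set.indicator_union_of_disjoint (D_disjoint (by omega)) _]


lemma D_child_left (i j : ℤ) : D (i+1) (2*j) ⊆ D i j := by
  rw [D_split i j]; exact Set.subset_union_left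

lemma D_child_right (i j : ℤ) : D (i+1) (2*j+1) ⊆ D i j := by
  rw [D_split i j]; exact Set.subset_union_right

/-- The Haar wavelet as an element of L². -/
noncomputable def psiL (i j : ℤ) : Lp ℝ 2 (volume : Measure ℝ) :=
  (2:ℝ)^((i:ℝ)/2) • (E (i+1) (2*j) - E (i+1) (2*j+1))

lemma inner_psiL_expand (i j i' j' : ℤ) : ⟪psiL i j, psiL i' j'⟫ =
    (2:ℝ)^((i:ℝ)/2) * (2:ℝ)^((i':ℝ)/2) *
      (⟪E (i+1) (2*j), E (i'+1) (2*j')⟫ - ⟪E (i+1) (2*j), E (i'+1) (2*j'+1)⟫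
        - (⟪E (i+1) (2*j+1), E (i'+1) (2*j')⟫ - ⟪E (i+1) (2*j+1), E (i'+1) (2*j'+1)⟫)) := by
  simp only [psiL, real_inner_smul_left, real_inner_smul_right, inner_sub_left, inner_sub_right]
  ring

lemma inner_E_children_eq {k a i' j' : ℤ} (h : k ≤ i') :
    ⟪E k a, E (i'+1) (2*j')⟫ = ⟪E k a, E (i'+1) (2*j'+1)⟫ := by
  rcases D_subset_or_disjoint (j := a) (j' := j') h with hsub | hdis
  · rw [inner_E_E_of_subset ((D_child_left i' j').trans hsub),
      inner_E_E_of_subset ((D_child_right i' j').trans hsub)]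
  · rw [inner_E_E_of_disjoint (hdis.mono_right (D_child_left i' j')),
      inner_E_E_of_disjoint (hdis.mono_right (D_child_right i' j'))]

lemma rpow_half_sq (i : ℤ) : (2:ℝ)^((i:ℝ)/2) * (2:ℝ)^((i:ℝ)/2) = (2:ℝ)^i := by
  rw [← Real.rpow_add (by norm_num : (0:ℝ) < 2), ← Real.rpow_intCast 2 i]
  norm_num

lemma inner_psiL_self (i j : ℤ) : ⟪psiL i j, psiL i j⟫ = 1 := by
  rw [inner_psiL_expand]
  rw [inner_E_E_of_subset (subset_refl _), inner_E_E_of_subset (subset_refl _),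
    inner_E_E_of_disjoint (D_disjoint (by omega)), inner_E_E_of_disjoint (D_disjoint (by omega)),
    rpow_half_sq]
  have h1 : (2:ℝ)^(-(i+1)) * 2 = (2:ℝ)^(-i) := by
    rw [← zpow_add_one₀ (by norm_num : (2:ℝ) ≠ 0)]; norm_num
  have h2 : (2:ℝ)^i * (2:ℝ)^(-i) = 1 := by
    rw [← zpow_add₀ (by norm_num : (2:ℝ) ≠ 0)]; norm_num
  linear_combination (2:ℝ)^i * h1 + h2

lemma inner_psiL_of_le {i j i' j' : ℤ} (h : i ≤ i') (hne : (i,j) ≠ (i',j')) :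
    ⟪psiL i j, psiL i' j'⟫ = 0 := by
  rcases eq_or_lt_of_le h with rfl | hlt
  · have hj : j ≠ j' := by simpa using hne
    rw [inner_psiL_expand,
      inner_E_E_of_disjoint (D_disjoint (by omega)),
      inner_E_E_of_disjoint (D_disjoint (by omega)),
      inner_E_E_of_disjoint (D_disjoint (by omega)),
      inner_E_E_of_disjoint (D_disjoint (by omega))]
    ring
  · have h1 : i + 1 ≤ i' := hlt
    rw [inner_psiL_expand, inner_E_children_eq h1, inner_E_children_eq h1]
    ring

lemma orthonormal_psiL : Orthonormal ℝ (fun p : ℤ × ℤ => psiL p.1 p.2) := by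
  rw [orthonormal_iff_ite]
  rintro ⟨i, j⟩ ⟨i', j'⟩
  by_cases hpq : (i, j) = (i', j')
  · cases hpq
    simpa using inner_psiL_self i j
  · rw [if_neg hpq]
    rcases le_total i i' with h | h
    · exact inner_psiL_of_le h hpq
    · rw [real_inner_comm]
      exact inner_psiL_of_le h (fun e => hpq (Prod.ext (congrArg Prod.fst e).symm (congrArg Prod.snd e).symm))


section Completeness

variable {g : Lp ℝ 2 (volume : Measure ℝ)}

lemma inner_E_parent (i j : ℤ) (g : Lp ℝ 2 (volume : Measure ℝ)) :
    ⟪E i j, g⟫ = ⟪E (i+1) (2*j), g⟫ + ⟪E (i+1) (2*j+1), g⟫ := by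
  rw [E_split, inner_add_left]

lemma inner_E_sibling_eq (i j : ℤ) (h0 : ⟪psiL i j, g⟫ = 0) :
    ⟪E (i+1) (2*j), g⟫ = ⟪E (i+1) (2*j+1), g⟫ := by
  have h2 : (2:ℝ)^((i:ℝ)/2) ≠ 0 := ne_of_gt (Real.rpow_pos_of_pos (by norm_num) _)
  rw [psiL, real_inner_smul_left, inner_sub_left, mul_eq_zero] at h0
  rcases h0 with h | h
  · exact absurd h h2
  · linarith

lemma inner_E_eq_zero (hg : ∀ i j : ℤ, ⟪psiL i j, g⟫ = 0) (i j : ℤ) :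
    ⟪E i j, g⟫ = 0 := by
  have key : ∀ n : ℕ, ∀ i j : ℤ,
      |⟪E i j, g⟫| ≤ (2:ℝ)^(-(i:ℝ)/2) * ‖g‖ * ((2:ℝ)^(-(1:ℝ)/2))^n := by
    intro n
    induction n with
    | zero =>
      intro i j
      simpa [norm_E] using abs_real_inner_le_norm (E i j) g
    | succ n ih =>
      intro i j
      obtain ⟨k, rfl⟩ : ∃ k, i = k + 1 := ⟨i - 1, by ring⟩
      have hhalf : ∀ q : ℤ, (j = 2*q ∨ j = 2*q+1) → ⟪E (k+1) j, g⟫ = (1/2) * ⟪E k q, g⟫ := by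
        intro q hq
        have hsib := inner_E_sibling_eq k q (hg k q)
        have hpar := inner_E_parent k q g
        rcases hq with rfl | rfl
        · linarith
        · linarith
      have hexp : (1/2) * ((2:ℝ)^(-(k:ℝ)/2)) =
          (2:ℝ)^(-((k:ℝ)+1)/2) * (2:ℝ)^(-(1:ℝ)/2) := by
        rw [← Real.rpow_add (by norm_num : (0:ℝ) < 2),
          show (1:ℝ)/2 = (2:ℝ)^(-1:ℝ) by
            rw [Real.rpow_neg_one]; norm_num,
          ← Real.rpow_add (by norm_num : (0:ℝ) < 2)]
        ring_nf
      rcases Int.even_or_odd j with ⟨q, hq⟩ | ⟨q, hq⟩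
      · have h := hhalf q (Or.inl (by omega))
        rw [h, abs_mul, abs_of_nonneg (by norm_num : (0:ℝ) ≤ 1/2)]
        calc (1/2) * |⟪E k q, g⟫|
            ≤ (1/2) * ((2:ℝ)^(-(k:ℝ)/2) * ‖g‖ * ((2:ℝ)^(-(1:ℝ)/2))^n) := by
              have := ih k q; linarith
          _ = (2:ℝ)^(-((k:ℝ)+1)/2) * ‖g‖ * ((2:ℝ)^(-(1:ℝ)/2))^(n+1) := by
              rw [pow_succ]
              linear_combination (‖g‖ * ((2:ℝ)^(-(1:ℝ)/2))^n) * hexp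
          _ = (2:ℝ)^(-((k+1:ℤ):ℝ)/2) * ‖g‖ * ((2:ℝ)^(-(1:ℝ)/2))^(n+1) := by push_cast; ring_nf
      · have h := hhalf q (Or.inr (by omega))
        rw [h, abs_mul, abs_of_nonneg (by norm_num : (0:ℝ) ≤ 1/2)]
        calc (1/2) * |⟪E k q, g⟫|
            ≤ (1/2) * ((2:ℝ)^(-(k:ℝ)/2) * ‖g‖ * ((2:ℝ)^(-(1:ℝ)/2))^n) := by
              have := ih k q; linarith
          _ = (2:ℝ)^(-((k:ℝ)+1)/2) * ‖g‖ * ((2:ℝ)^(-(1:ℝ)/2))^(n+1) := by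
              rw [pow_succ]
              linear_combination (‖g‖ * ((2:ℝ)^(-(1:ℝ)/2))^n) * hexp
          _ = (2:ℝ)^(-((k+1:ℤ):ℝ)/2) * ‖g‖ * ((2:ℝ)^(-(1:ℝ)/2))^(n+1) := by push_cast; ring_nf
  have hc0 : (0:ℝ) ≤ (2:ℝ)^(-(1:ℝ)/2) := (Real.rpow_pos_of_pos (by norm_num) _).le
  have hc1 : (2:ℝ)^(-(1:ℝ)/2) < 1 :=
    Real.rpow_lt_one_of_one_lt_of_neg (by norm_num) (by norm_num)
  have hlim : Filter.Tendsto
      (fun n : ℕ => (2:ℝ)^(-(i:ℝ)/2) * ‖g‖ * ((2:ℝ)^(-(1:ℝ)/2))^n)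
      Filter.atTop (nhds 0) := by
    have := tendsto_pow_atTop_nhds_zero_of_lt_one hc0 hc1
    simpa using this.const_mul ((2:ℝ)^(-(i:ℝ)/2) * ‖g‖)
  have habs : |⟪E i j, g⟫| ≤ 0 :=
    le_of_tendsto_of_tendsto' tendsto_const_nhds hlim (fun n => key n i j)
  exact abs_nonpos_iff.mp habs

/-- If all dyadic averages of `g` vanish, then `g = 0`, by the Lebesgue differentiation
theorem. -/
lemma eq_zero_of_setIntegral_D_eq_zero (g : Lp ℝ 2 (volume : Measure ℝ))
    (h : ∀ i j : ℤ, ∫ x in D i j, g x = 0) : g = 0 := by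
  have hloc : MeasureTheory.LocallyIntegrable g volume :=
    (MeasureTheory.Lp.memLp g).locallyIntegrable one_le_two
  have hdiff := IsUnifLocDoublingMeasure.ae_tendsto_average (μ := volume) hloc 1
  apply MeasureTheory.Lp.ext
  have hz : ⇑(0 : Lp ℝ 2 (volume : Measure ℝ)) =ᵐ[volume] (fun _ => (0:ℝ)) :=
    MeasureTheory.Lp.coeFn_zero _ _ _
  refine Filter.EventuallyEq.trans ?_ hz.symm
  filter_upwards [hdiff] with x hx
  classical
  set jn : ℕ → ℤ := fun n => ⌊(2:ℝ)^(n:ℤ) * x⌋ with hjn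
  set w : ℕ → ℝ := fun n => (jn n : ℝ) * (2:ℝ)^(-(n:ℤ)) + (2:ℝ)^(-(n:ℤ))/2 with hw
  set δ : ℕ → ℝ := fun n => (2:ℝ)^(-(n:ℤ))/2 with hδ
  have hball : ∀ n, Metric.closedBall (w n) (δ n) =
      Set.Icc ((jn n : ℝ) * (2:ℝ)^(-(n:ℤ))) (((jn n : ℝ)+1) * (2:ℝ)^(-(n:ℤ))) := by
    intro n
    rw [Real.closedBall_eq_Icc]
    congr 1 <;> simp only [hw, hδ] <;> ring
  have hδpos : ∀ n, 0 < δ n := fun n => by positivity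
  have htend : Filter.Tendsto δ Filter.atTop (nhdsWithin 0 (Set.Ioi 0)) := by
    rw [tendsto_nhdsWithin_iff]
    constructor
    · have : δ = fun n : ℕ => ((1:ℝ)/2)^n / 2 := by
        funext n
        simp only [hδ, zpow_neg, zpow_natCast]
        rw [div_pow, one_pow]
        ring_nf
      rw [this]
      simpa using
        ((tendsto_pow_atTop_nhds_zero_of_lt_one (by norm_num : (0:ℝ) ≤ 1/2)
          (by norm_num : (1:ℝ)/2 < 1)).div_const 2)
    · exact Filter.Eventually.of_forall (fun n => hδpos n)
  have hmem : ∀ n : ℕ, x ∈ Metric.closedBall (w n) (1 * δ n) := by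
    intro n
    rw [one_mul, hball n]
    have h1 : ((jn n : ℝ)) ≤ (2:ℝ)^(n:ℤ) * x := Int.floor_le _
    have h2 : (2:ℝ)^(n:ℤ) * x < (jn n : ℝ) + 1 := Int.lt_floor_add_one _
    have := two_zpow_pos (n:ℤ)
    constructor
    · rw [zpow_neg, ← div_eq_mul_inv, div_le_iff₀ this]; nlinarith
    · rw [zpow_neg, ← div_eq_mul_inv, le_div_iff₀ this]; nlinarith
  have havg : ∀ n : ℕ, (⨍ y in Metric.closedBall (w n) (δ n), g y ∂volume) = 0 := by
    intro n
    rw [hball n, MeasureTheory.setAverage_eq,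
      setIntegral_congr_set (Ico_ae_eq_Icc (α := ℝ)).symm]
    have := h (n:ℤ) (jn n)
    rw [D] at this
    rw [this, smul_zero]
  have hx' := hx w δ htend (Filter.Eventually.of_forall hmem)
  rw [Filter.tendsto_congr havg] at hx'
  exact (tendsto_nhds_unique tendsto_const_nhds hx').symm

end Completeness


lemma psiL_coeFn (i j : ℤ) : ⇑(psiL i j) =ᵐ[volume] haarWavelet i j := by
  filter_upwards [MeasureTheory.Lp.coeFn_smul ((2:ℝ)^((i:ℝ)/2))
      (E (i+1) (2*j) - E (i+1) (2*j+1)),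
    MeasureTheory.Lp.coeFn_sub (E (i+1) (2*j)) (E (i+1) (2*j+1)),
    E_coeFn (i+1) (2*j), E_coeFn (i+1) (2*j+1)] with x h1 h2 h3 h4
  rw [psiL, h1, Pi.smul_apply, h2, Pi.sub_apply, h3, h4, haarWavelet_eq, smul_eq_mul]

end HaarAux

open HaarAux in
open scoped RealInnerProductSpace in
theorem haar_reconstruction_and_parseval
    (F : ℤ × ℤ → Lp ℝ 2 (volume : Measure ℝ))
    (hF : ∀ p : ℤ × ℤ, (F p : ℝ → ℝ) =ᵐ[volume] haarWavelet p.1 p.2)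
    (f : Lp ℝ 2 (volume : Measure ℝ)) :
    HasSum (fun p : ℤ × ℤ => (∫ x : ℝ, (f : ℝ → ℝ) x * haarWavelet p.1 p.2 x) • F p) f ∧
      HasSum (fun p : ℤ × ℤ => (∫ x : ℝ, (f : ℝ → ℝ) x * haarWavelet p.1 p.2 x) ^ 2)
        (‖f‖ ^ 2) := by
  classical
  have hFpsi : ∀ p : ℤ × ℤ, F p = psiL p.1 p.2 := fun p =>
    MeasureTheory.Lp.ext ((hF p).trans (psiL_coeFn p.1 p.2).symm)
  have hon : Orthonormal ℝ F := by
    have := orthonormal_psiL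
    rwa [show (fun p : ℤ × ℤ => psiL p.1 p.2) = F from funext (fun p => (hFpsi p).symm)] at this
  have hsp : (Submodule.span ℝ (Set.range F))ᗮ = ⊥ := by
    rw [Submodule.eq_bot_iff]
    intro g hg
    have h0 : ∀ i j : ℤ, ⟪psiL i j, g⟫ = 0 := by
      intro i j
      rw [← hFpsi (i, j)]
      exact Submodule.inner_right_of_mem_orthogonal
        (Submodule.subset_span (Set.mem_range_self ((i, j) : ℤ × ℤ))) hg
    refine eq_zero_of_setIntegral_D_eq_zero g (fun i j => ?_)
    rw [← inner_E i j g]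
    exact inner_E_eq_zero h0 i j
  set b : HilbertBasis (ℤ × ℤ) ℝ (Lp ℝ 2 (volume : Measure ℝ)) :=
    HilbertBasis.mkOfOrthogonalEqBot hon hsp with hb
  have hbco : ⇑b = F := HilbertBasis.coe_mkOfOrthogonalEqBot hon hsp
  have hcoef : ∀ p : ℤ × ℤ,
      (∫ x : ℝ, (f : ℝ → ℝ) x * haarWavelet p.1 p.2 x) = ⟪F p, f⟫ := by
    intro p
    rw [MeasureTheory.L2.inner_def]
    refine (integral_congr_ae ?_).symm
    filter_upwards [hF p] with x hx
    rw [RCLike.inner_apply, starRingEnd_apply, star_trivial, hx, mul_comm]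
  constructor
  · have h1 := b.hasSum_repr f
    have heq : (fun p : ℤ × ℤ =>
        (∫ x : ℝ, (f : ℝ → ℝ) x * haarWavelet p.1 p.2 x) • F p)
        = fun p => b.repr f p • b p := by
      funext p
      rw [hcoef p, b.repr_apply_apply, hbco]
    rw [heq]
    exact h1
  · have h2 := b.hasSum_inner_mul_inner f f
    have heq : (fun p : ℤ × ℤ =>
        (∫ x : ℝ, (f : ℝ → ℝ) x * haarWavelet p.1 p.2 x) ^ 2)
        = fun p => ⟪f, b p⟫ * ⟪b p, f⟫ := by
      funext p
      rw [hcoef p, hbco, real_inner_comm f (F p), pow_two]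
    rw [heq, ← real_inner_self_eq_norm_sq f]
    exact h2
end
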